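/- Let A be an odd cluster in T_d, let B ∈ ℬ(A), and let C be the set induced by B. Then C ⊆ A. -/

import Mathlib

open MeasureTheory

/-- `x` has at least two `G`-neighbors in the set `B`. -/
def TwoNbrsIn {V : Type} (G : SimpleGraph V) (B : Set V) (x : V) : Prop :=
  ∃ y ∈ B, ∃ z ∈ B, y ≠ z ∧ G.Adj x y ∧ G.Adj x z

/-- `x` is an odd vertex: its graph distance to the fixed root `o` is odd. -/
def IsOddV {V : Type} (G : SimpleGraph V) (o x : V) : Prop := Odd (G.dist o x)

/-- `x` is an even vertex: its graph distance to the fixed root `o` is even. -/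
def IsEvenV {V : Type} (G : SimpleGraph V) (o x : V) : Prop := Even (G.dist o x)

/-- `S` is connected with respect to the double-neighbor relation (graph distance 2)
within `S`. -/
def DNConnected {V : Type} (G : SimpleGraph V) (S : Set V) : Prop :=
  ∀ x ∈ S, ∀ y ∈ S,
    Relation.ReflTransGen (fun a b => a ∈ S ∧ b ∈ S ∧ G.dist a b = 2) x y

/-- An odd cluster: a finite nonempty set of odd vertices, connected under the
double-neighbor relation. -/
def IsOddCluster {V : Type} (G : SimpleGraph V) (o : V) (A : Set V) : Prop :=
  A.Finite ∧ A.Nonempty ∧ (∀ x ∈ A, IsOddV G o x) ∧ DNConnected G A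

/-- An even cluster: a finite nonempty set of even vertices, connected under the
double-neighbor relation. -/
def IsEvenCluster {V : Type} (G : SimpleGraph V) (o : V) (A : Set V) : Prop :=
  A.Finite ∧ A.Nonempty ∧ (∀ x ∈ A, IsEvenV G o x) ∧ DNConnected G A

/-- Two vertex sets (of the same parity) are non-adjacent: they are disjoint and no
pair of points of the two sets is at graph distance 2 (so their graph distance
exceeds 2). -/
def NonAdj {V : Type} (G : SimpleGraph V) (A B : Set V) : Prop :=
  Disjoint A B ∧ ∀ a ∈ A, ∀ b ∈ B, G.dist a b ≠ 2

/-- The neighborhood `N(A)` of a vertex set `A`. -/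
def nbhd {V : Type} (G : SimpleGraph V) (A : Set V) : Set V := {y | ∃ x ∈ A, G.Adj x y}

/-- `Prr G A B`: the set of elements of `A` having at least two neighbors in `B`. -/
def Prr {V : Type} (G : SimpleGraph V) (A B : Set V) : Set V := {v ∈ A | TwoNbrsIn G B v}

/-- The set induced by `B`: vertices outside `B` with at least two neighbors in `B`. -/
def inducedSet {V : Type} (G : SimpleGraph V) (B : Set V) : Set V :=
  {x | x ∉ B ∧ TwoNbrsIn G B x}

/-- `ℬ(A)`: the collection of sets `B ⊆ N(A)` such that no proper subset of `B` has the
same `Prr`-value. -/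
def minimalB {V : Type} (G : SimpleGraph V) (A : Set V) : Set (Set V) :=
  {B | B ⊆ nbhd G A ∧ ∀ B' : Set V, B' ⊂ B → Prr G A B' ≠ Prr G A B}

/-- `ℬ(A, C)`: the members of `ℬ(A)` whose `Prr`-value is `C`. -/
def minimalBC {V : Type} (G : SimpleGraph V) (A C : Set V) : Set (Set V) :=
  {B | B ∈ minimalB G A ∧ Prr G A B = C}

/-!
Suppose `x ∉ A` has two distinct neighbours `y, z ∈ B ⊆ N(A)`, adjacent to `a, b ∈ A`.
By parity `x` is odd, so neither `x` nor any even midpoint of a double-neighbour step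
inside `A` equals `x`. Double-neighbour connectivity of `A` then yields a walk
`y - a - ⋯ - b - z` avoiding `x`; together with the edges `xy`, `xz` this closes a cycle
in the tree unless `y = z`.
-/

namespace SimpleGraph

variable {V : Type*} {G : SimpleGraph V}

lemma IsTree.odd_dist_iff_even_dist_of_adj (hG : G.IsTree) (o : V) {a b : V}
    (hab : G.Adj a b) : Odd (G.dist o a) ↔ Even (G.dist o b) := by
  rcases hG.dist_eq_dist_add_one_of_adj o hab with h | h <;> rw [h] <;> simp [parity_simps]

lemma exists_adj_adj_of_dist_eq_two {u v : V} (h : G.dist u v = 2) :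
    ∃ w, G.Adj u w ∧ G.Adj w v := by
  have : G.edist u v = 2 := by
    rw [dist, ENat.toNat_eq_iff two_ne_zero] at h
    exact_mod_cast h
  obtain ⟨w, hw⟩ := (edist_eq_two_iff.mp this).2.2
  rw [mem_commonNeighbors] at hw
  exact ⟨w, hw.1, hw.2.symm⟩

lemma IsAcyclic.eq_of_walk_notMem_support (hG : G.IsAcyclic) {x y z : V}
    (hxy : G.Adj x y) (hxz : G.Adj x z) (q : G.Walk y z) (hq : x ∉ q.support) : y = z := by
  have hbridge := isBridge_iff_forall_walk_mem_edges.mp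
    (isAcyclic_iff_forall_adj_isBridge.mp hG hxy) (.cons hxz q.reverse)
  rw [Walk.edges_cons, List.mem_cons] at hbridge
  rcases hbridge with h | h
  · exact Sym2.congr_right.mp h
  · exact absurd (q.reverse.fst_mem_support_of_mem_edges h) (by simpa using hq)

lemma Walk.exists_notMem_support_of_dist_eq_two {x u c c' : V} (p : G.Walk u c) (hp : x ∉ p.support)
    (hcc' : G.dist c c' = 2) (hcx : ¬ G.Adj c x) (hc'x : c' ≠ x) :
    ∃ q : G.Walk u c', x ∉ q.support := by
  obtain ⟨m, hcm, hmc'⟩ := exists_adj_adj_of_dist_eq_two hcc'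
  have hmx : m ≠ x := by rintro rfl; exact hcx hcm
  refine ⟨(p.concat hcm).concat hmc', ?_⟩
  simp [Walk.support_concat, hp, hmx.symm, hc'x.symm]

end SimpleGraph

open SimpleGraph

lemma DNConnected.exists_walk_notMem_support {V : Type} {G : SimpleGraph V} {S : Set V}
    (hS : DNConnected G S) {x u a b : V} (hxS : x ∉ S) (hnadj : ∀ c ∈ S, ¬ G.Adj c x)
    (ha : a ∈ S) (hb : b ∈ S) (p : G.Walk u a) (hp : x ∉ p.support) :
    ∃ q : G.Walk u b, x ∉ q.support := by
  have hab := hS a ha b hb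
  clear hb
  induction hab with
  | refl => exact ⟨p, hp⟩
  | tail _ hstep ih =>
    obtain ⟨q, hq⟩ := ih
    exact q.exists_notMem_support_of_dist_eq_two hq hstep.2.2 (hnadj _ hstep.1)
      (ne_of_mem_of_not_mem hstep.2.1 hxS)

lemma DNConnected.eq_of_adj_of_adj {V : Type} {G : SimpleGraph V} {S : Set V}
    (hS : DNConnected G S) (hG : G.IsAcyclic) {x y z a b : V} (hxS : x ∉ S)
    (hnadj : ∀ c ∈ S, ¬ G.Adj c x) (hxy : G.Adj x y) (hxz : G.Adj x z)
    (ha : a ∈ S) (hb : b ∈ S) (hya : G.Adj y a) (hbz : G.Adj b z) : y = z := by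
  obtain ⟨q, hq⟩ := hS.exists_walk_notMem_support hxS hnadj ha hb (.cons hya .nil)
    (by simp [hxy.ne, ne_of_mem_of_not_mem ha hxS |>.symm])
  refine hG.eq_of_walk_notMem_support hxy hxz (q.concat hbz) ?_
  simp [Walk.support_concat, hq, hxz.ne]

theorem induced_of_minimal_subset_general
    (V : Type) (G : SimpleGraph V) (o : V)
    (hconn : G.Connected) (hacyc : G.IsAcyclic)
    (A : Set V) (hA : IsOddCluster G o A)
    (B : Set V) (hB : B ∈ minimalB G A) :
    inducedSet G B ⊆ A := by
  rintro x ⟨-, y, hyB, z, hzB, hyz, hxy, hxz⟩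
  by_contra hxA
  obtain ⟨-, -, hAodd, hAconn⟩ := hA
  have hT : G.IsTree := ⟨hconn, hacyc⟩
  obtain ⟨a, ha, hay⟩ := hB.1 hyB
  obtain ⟨b, hb, hbz⟩ := hB.1 hzB
  have hxodd : Odd (G.dist o x) := (hT.odd_dist_iff_even_dist_of_adj o hxy).mpr
    ((hT.odd_dist_iff_even_dist_of_adj o hay).mp (hAodd a ha))
  have hnadj : ∀ c ∈ A, ¬ G.Adj c x := fun c hc hcx =>
    Nat.not_even_iff_odd.mpr hxodd ((hT.odd_dist_iff_even_dist_of_adj o hcx).mp (hAodd c hc))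
  exact hyz (hAconn.eq_of_adj_of_adj hacyc hxA hnadj hxy hxz ha hb hay.symm hbz)

/-- **Lemma.** On the infinite `d`-regular tree, if `A` is an odd cluster and
`B ∈ ℬ(A)`, then the set induced by `B` is contained in `A`. -/
theorem induced_of_minimal_subset (d : ℕ) (hd : 3 ≤ d)
    (V : Type) (G : SimpleGraph V) (o : V)
    (hconn : G.Connected) (hacyc : G.IsAcyclic)
    (hreg : ∀ v : V, (G.neighborSet v).ncard = d)
    (A : Set V) (hA : IsOddCluster G o A)
    (B : Set V) (hB : B ∈ minimalB G A) :
    inducedSet G B ⊆ A :=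
  induced_of_minimal_subset_general V G o hconn hacyc A hA B hB
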